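/- arXiv:math/0006062 — 2 statements merged into one kernel-verified Lean document; each statement's English description precedes it below -/
import Mathlib

section
/- The third rack homology group H_3(BT) of the three-colour rack T is isomorphic to Z × Z/3. -/
/-!
The computation rests on an explicit certificate. Two 3-cycles `z₁` (the degenerate cube
`(2,2,2)`) and `z₂`, an integral 3-cocycle `f` and a 3-cochain `g` that is a cocycle modulo 3
form dual pairs, `∂w = 3 z₂` for a 4-chain `w`, and maps `S : C₃ → C₄`, `T : C₂ → C₃` satisfy
`∂S + T∂ = id - f(·) z₁ - g(·) z₂`. Hence every 3-cycle `x` is homologous to `f(x) z₁ + g(x) z₂`,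
and `x ↦ (f x, g x mod 3)` identifies `H₃` with `ℤ × ℤ/3`. The chains, cochains and homotopies
were computed by machine; the identities between them are checked by evaluation over the
finitely many cubes.
-/

/-- The three-colour rack operation on `T = ZMod 3`: `a ^ b := 2*b - a`. -/
def triOp (a b : ZMod 3) : ZMod 3 := 2 * b - a

/-- Face maps of the rack space of the three-colour rack: `∂_i^0` deletes the
`i`-th coordinate; `∂_i^1` acts by `x_i` on all earlier coordinates and then
deletes the `i`-th coordinate. -/
def triFace (ε : Bool) {n : ℕ} (i : Fin (n + 1)) (x : Fin (n + 1) → ZMod 3) :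
    Fin n → ZMod 3 :=
  Fin.removeNth i (fun j => if ε = true ∧ j < i then triOp (x j) (x i) else x j)

/-- Boundary of a single `(n+1)`-cube: `∂ x = Σ_{i} (-1)^i (∂_i^0 x - ∂_i^1 x)`. -/
noncomputable def triBnd {n : ℕ} (x : Fin (n + 1) → ZMod 3) : (Fin n → ZMod 3) →₀ ℤ :=
  ∑ i : Fin (n + 1), (-1 : ℤ) ^ ((i : ℕ) + 1) •
    (Finsupp.single (triFace false i x) 1 - Finsupp.single (triFace true i x) 1)

/-- The boundary map of the rack chain complex of the three-colour rack,
from degree `n+1` to degree `n`. -/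
noncomputable def triBoundary (n : ℕ) :
    ((Fin (n + 1) → ZMod 3) →₀ ℤ) →ₗ[ℤ] ((Fin n → ZMod 3) →₀ ℤ) :=
  Finsupp.lift _ ℤ _ triBnd

open LinearMap Submodule

section

variable {C₄ C₃ C₂ : Type*} [AddCommGroup C₄] [AddCommGroup C₃] [AddCommGroup C₂]

structure HomologyCertificate (d₄ : C₄ →ₗ[ℤ] C₃) (d₃ : C₃ →ₗ[ℤ] C₂) (n : ℕ) where
  z₁ : C₃
  z₂ : C₃
  f : C₃ →ₗ[ℤ] ℤ
  g : C₃ →ₗ[ℤ] ℤ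
  w : C₄
  d_z₁ : d₃ z₁ = 0
  d_z₂ : d₃ z₂ = 0
  f_z₁ : f z₁ = 1
  f_z₂ : f z₂ = 0
  g_z₁ : g z₁ = 0
  g_z₂ : g z₂ = 1
  f_d : ∀ y, f (d₄ y) = 0
  g_d : ∀ y, (g (d₄ y) : ZMod n) = 0
  d_w : d₄ w = n • z₂
  sub_mem_range : ∀ x, d₃ x = 0 → x - f x • z₁ - g x • z₂ ∈ range d₄

namespace HomologyCertificate

variable {d₄ : C₄ →ₗ[ℤ] C₃} {d₃ : C₃ →ₗ[ℤ] C₂} {n : ℕ} (c : HomologyCertificate d₄ d₃ n)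

def classMap : ker d₃ →ₗ[ℤ] ℤ × ZMod n :=
  (c.f.prod ((Int.castAddHom (ZMod n)).toIntLinearMap ∘ₗ c.g)) ∘ₗ (ker d₃).subtype

@[simp]
lemma classMap_apply (x : ker d₃) : c.classMap x = (c.f x, (c.g x : ZMod n)) := rfl

lemma classMap_surjective : Function.Surjective c.classMap := by
  rintro ⟨m, k⟩
  refine ⟨⟨m • c.z₁ + (k.cast : ℤ) • c.z₂, by simp [c.d_z₁, c.d_z₂]⟩, ?_⟩
  simp [c.f_z₁, c.f_z₂, c.g_z₁, c.g_z₂]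

lemma comap_range_eq_ker_classMap :
    comap (ker d₃).subtype (range d₄) = ker c.classMap := by
  ext ⟨x, hx⟩
  simp only [mem_comap, Submodule.subtype_apply, mem_ker, classMap_apply, Prod.mk_eq_zero]
  constructor
  · rintro ⟨y, rfl⟩
    exact ⟨c.f_d y, c.g_d y⟩
  · rintro ⟨hf, hg⟩
    obtain ⟨k, hk⟩ := (ZMod.intCast_zmod_eq_zero_iff_dvd _ n).1 hg
    have hw : d₄ (k • c.w) = c.g x • c.z₂ := by
      rw [map_zsmul, c.d_w, hk, mul_comm, mul_smul, natCast_zsmul]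
    have h := add_mem (c.sub_mem_range x hx) (mem_range_self d₄ (k • c.w))
    rwa [hw, hf, zero_smul, sub_zero, sub_add_cancel] at h

noncomputable def quotientEquiv :
    (ker d₃ ⧸ comap (ker d₃).subtype (range d₄)) ≃ₗ[ℤ] ℤ × ZMod n :=
  (quotEquivOfEq _ _ c.comap_range_eq_ker_classMap).trans
    (c.classMap.quotKerEquivOfSurjective c.classMap_surjective)

end HomologyCertificate

end

/-- Integral chains as lists of (coefficient, generator): unlike `Finsupp`, these compute, so
identities between explicit chains can be decided. -/
abbrev Terms (X : Type*) := List (ℤ × X)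

namespace Terms

variable {X Y : Type*}

noncomputable def toFinsupp (l : Terms X) : X →₀ ℤ := (l.map fun p => Finsupp.single p.2 p.1).sum

def smul (c : ℤ) (l : Terms X) : Terms X := l.map fun p => (c * p.1, p.2)

def bind (l : Terms X) (F : X → Terms Y) : Terms Y := l.flatMap fun p => (F p.2).smul p.1

def coeff [DecidableEq X] (l : Terms X) (a : X) : ℤ :=
  (l.map fun p => if p.2 = a then p.1 else 0).sum

def lookup [DecidableEq X] (t : List (X × Terms Y)) (x : X) : Terms Y := (t.lookup x).getD []

noncomputable def dual [DecidableEq X] (l : Terms X) : (X →₀ ℤ) →ₗ[ℤ] ℤ :=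
  Finsupp.linearCombination ℤ l.coeff

noncomputable def tableMap [DecidableEq X] (t : List (X × Terms Y)) : (X →₀ ℤ) →ₗ[ℤ] (Y →₀ ℤ) :=
  Finsupp.linearCombination ℤ fun x => (lookup t x).toFinsupp

@[simp]
lemma toFinsupp_nil : toFinsupp ([] : Terms X) = 0 := rfl

@[simp]
lemma toFinsupp_cons (p : ℤ × X) (l : Terms X) :
    toFinsupp (p :: l) = Finsupp.single p.2 p.1 + l.toFinsupp := rfl

@[simp]
lemma toFinsupp_append (l₁ l₂ : Terms X) :
    toFinsupp (l₁ ++ l₂) = l₁.toFinsupp + l₂.toFinsupp := by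
  simp [toFinsupp]

@[simp]
lemma toFinsupp_smul (c : ℤ) (l : Terms X) : (l.smul c).toFinsupp = c • l.toFinsupp := by
  induction l with
  | nil => simp [smul]
  | cons p l ih => simp_all [smul, smul_add]

lemma toFinsupp_flatMap {ι : Type*} (G : ι → Terms X) (l : List ι) :
    toFinsupp (l.flatMap G) = (l.map fun i => (G i).toFinsupp).sum := by
  induction l with
  | nil => rfl
  | cons i l ih => simp [ih]

lemma toFinsupp_apply [DecidableEq X] (l : Terms X) (a : X) : l.toFinsupp a = l.coeff a := by
  induction l with
  | nil => simp [coeff]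
  | cons p l ih => simp_all [coeff, Finsupp.single_apply]

lemma toFinsupp_eq_of_coeff_eq [DecidableEq X] {l₁ l₂ : Terms X} (h : l₁.coeff = l₂.coeff) :
    l₁.toFinsupp = l₂.toFinsupp :=
  Finsupp.ext fun a => by rw [toFinsupp_apply, toFinsupp_apply, h]

lemma linearCombination_toFinsupp (F : X → Terms Y) (l : Terms X) :
    Finsupp.linearCombination ℤ (fun x => (F x).toFinsupp) l.toFinsupp = (l.bind F).toFinsupp := by
  induction l with
  | nil => simp [bind]
  | cons p l ih => simp_all [bind]

lemma dual_toFinsupp [DecidableEq X] (l m : Terms X) :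
    l.dual m.toFinsupp = (m.map fun p => p.1 * l.coeff p.2).sum := by
  induction m with
  | nil => simp
  | cons p m ih => simp_all [dual]

lemma dual_single [DecidableEq X] (l : Terms X) (x : X) :
    l.dual (Finsupp.single x 1) = l.coeff x := by
  simp [dual]

lemma tableMap_single [DecidableEq X] (t : List (X × Terms Y)) (x : X) :
    tableMap t (Finsupp.single x 1) = (lookup t x).toFinsupp := by
  simp [tableMap]

lemma tableMap_toFinsupp [DecidableEq X] (t : List (X × Terms Y)) (l : Terms X) :
    tableMap t l.toFinsupp = (l.bind (lookup t)).toFinsupp :=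
  linearCombination_toFinsupp _ l

end Terms

def boundaryTerms {n : ℕ} (x : Fin (n + 1) → ZMod 3) : Terms (Fin n → ZMod 3) :=
  (List.finRange (n + 1)).flatMap fun i : Fin (n + 1) =>
    [((-1) ^ ((i : ℕ) + 1), triFace false i x), (-(-1) ^ ((i : ℕ) + 1), triFace true i x)]

lemma triBnd_eq_toFinsupp {n : ℕ} (x : Fin (n + 1) → ZMod 3) :
    triBnd x = (boundaryTerms x).toFinsupp := by
  rw [triBnd, Fin.sum_univ_def, boundaryTerms, Terms.toFinsupp_flatMap]
  congr 1
  refine List.map_congr_left fun i _ => ?_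
  simp [sub_eq_add_neg]

lemma triBoundary_eq (n : ℕ) :
    triBoundary n = Finsupp.linearCombination ℤ fun x => (boundaryTerms x).toFinsupp := by
  simp_rw [← triBnd_eq_toFinsupp]
  rfl

lemma triBoundary_single {n : ℕ} (x : Fin (n + 1) → ZMod 3) :
    triBoundary n (Finsupp.single x 1) = (boundaryTerms x).toFinsupp := by
  rw [triBoundary_eq, Finsupp.linearCombination_single, one_smul]

lemma triBoundary_toFinsupp {n : ℕ} (l : Terms (Fin (n + 1) → ZMod 3)) :
    triBoundary n l.toFinsupp = (l.bind boundaryTerms).toFinsupp := by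
  rw [triBoundary_eq, Terms.linearCombination_toFinsupp]

def freeCycle : Terms (Fin 3 → ZMod 3) :=
  [(1, ![2, 2, 2])]

def torsionCycle : Terms (Fin 3 → ZMod 3) :=
  [(1, ![0, 0, 1]), (1, ![0, 1, 0]), (1, ![0, 2, 1]), (1, ![2, 2, 0]), (-4, ![2, 2, 2])]

def freeCocycle : Terms (Fin 3 → ZMod 3) :=
  [(1, ![0, 0, 0]), (3, ![0, 0, 2]), (1, ![0, 1, 1]), (3, ![0, 2, 0]), (1, ![0, 2, 2]),
   (1, ![1, 0, 0]), (-2, ![1, 1, 0]), (1, ![1, 1, 1]), (-1, ![1, 1, 2]), (4, ![1, 2, 0]),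
   (5, ![1, 2, 1]), (1, ![1, 2, 2]), (1, ![2, 0, 0]), (-1, ![2, 0, 1]), (4, ![2, 0, 2]),
   (-3, ![2, 1, 0]), (1, ![2, 1, 1]), (4, ![2, 2, 0]), (2, ![2, 2, 1]), (1, ![2, 2, 2])]

def torsionCocycle : Terms (Fin 3 → ZMod 3) :=
  [(1, ![0, 0, 2]), (1, ![0, 2, 0]), (-1, ![1, 1, 0]), (-1, ![1, 1, 2]), (2, ![1, 2, 0]),
   (2, ![1, 2, 1]), (1, ![2, 0, 1]), (1, ![2, 0, 2]), (-1, ![2, 1, 2]), (1, ![2, 2, 0])]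

def torsionBounding : Terms (Fin 4 → ZMod 3) :=
  [(-3, ![0, 0, 0, 2]), (-8, ![0, 0, 1, 2]), (-5, ![0, 0, 2, 0]), (-3, ![0, 0, 2, 1]),
   (1, ![0, 1, 0, 1]), (1, ![0, 1, 1, 2]), (2, ![0, 1, 2, 2]), (-2, ![0, 2, 0, 0]),
   (1, ![0, 2, 1, 0]), (1, ![0, 2, 1, 2]), (-1, ![0, 2, 2, 2]), (1, ![1, 0, 1, 0]),
   (-1, ![1, 0, 1, 2]), (-2, ![1, 1, 0, 2]), (1, ![2, 0, 1, 0])]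

-- Values of `T` and `S` on generators; generators that are not listed are sent to `0`.
def homotopy₂ : List ((Fin 2 → ZMod 3) × Terms (Fin 3 → ZMod 3)) :=
  [(![0, 0], [(-1, ![0, 0, 1])]),
   (![0, 1], [(-1, ![0, 0, 1]), (-1, ![0, 1, 0]), (-1, ![0, 2, 1]), (-1, ![1, 0, 1]),
              (1, ![1, 0, 2])]),
   (![0, 2], [(-1, ![0, 2, 1]), (-1, ![1, 0, 1]), (1, ![1, 0, 2])]),
   (![1, 0], [(-1, ![0, 0, 1]), (-1, ![0, 1, 0]), (1, ![0, 1, 2])]),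
   (![1, 1], [(-1, ![0, 0, 1]), (-1, ![0, 1, 0]), (-1, ![0, 2, 1])]),
   (![1, 2], [(1, ![0, 1, 2]), (1, ![0, 2, 1]), (1, ![1, 0, 1])])]

def homotopy₃ : List ((Fin 3 → ZMod 3) × Terms (Fin 4 → ZMod 3)) :=
  [(![0, 0, 0], [(-1, ![0, 0, 1, 2]), (-1, ![0, 0, 2, 0])]),
   (![0, 0, 2], [(1, ![0, 0, 0, 2]), (1, ![0, 0, 1, 2]), (1, ![0, 0, 2, 0]), (1, ![0, 0, 2, 1])]),
   (![0, 1, 1], [(-1, ![0, 0, 1, 2]), (-1, ![0, 0, 2, 0]), (1, ![0, 1, 1, 2]),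
                 (-1, ![0, 2, 0, 0])]),
   (![0, 2, 0], [(1, ![0, 0, 1, 2]), (1, ![0, 0, 2, 0]), (1, ![0, 1, 2, 0]), (1, ![0, 2, 0, 0])]),
   (![0, 2, 2], [(1, ![0, 1, 2, 2])]),
   (![1, 0, 0], [(-1, ![0, 0, 1, 2]), (-1, ![0, 0, 2, 0]), (-1, ![0, 2, 0, 0])]),
   (![1, 1, 0], [(-1, ![0, 0, 0, 2]), (-2, ![0, 0, 1, 2]), (-1, ![0, 0, 2, 0]),
                 (-1, ![0, 0, 2, 1])]),
   (![1, 1, 1], [(-1, ![0, 0, 0, 2]), (-1, ![0, 0, 1, 2]), (-1, ![0, 0, 2, 0])]),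
   (![1, 1, 2], [(-1, ![0, 0, 0, 2]), (-2, ![0, 0, 1, 2]), (-1, ![0, 0, 2, 0]),
                 (-1, ![0, 0, 2, 1]), (-1, ![1, 1, 0, 2])]),
   (![1, 2, 0], [(2, ![0, 0, 0, 2]), (3, ![0, 0, 1, 2]), (2, ![0, 0, 2, 0]), (2, ![0, 0, 2, 1]),
                 (-1, ![0, 1, 0, 2]), (-1, ![0, 2, 1, 2]), (1, ![1, 1, 0, 2])]),
   (![1, 2, 1], [(1, ![0, 0, 0, 2]), (2, ![0, 0, 1, 2]), (2, ![0, 0, 2, 0]), (1, ![0, 0, 2, 1]),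
                 (1, ![0, 1, 2, 0]), (-1, ![0, 1, 2, 2]), (1, ![0, 2, 0, 0]), (-1, ![0, 2, 0, 2])]),
   (![1, 2, 2], [(1, ![0, 1, 2, 2]), (-1, ![0, 2, 2, 2])]),
   (![2, 0, 0], [(-1, ![0, 0, 0, 2]), (-1, ![0, 0, 1, 2]), (-1, ![0, 0, 2, 1]),
                 (1, ![0, 1, 2, 0]), (1, ![0, 2, 0, 0]), (1, ![0, 2, 1, 0])]),
   (![2, 0, 1], [(1, ![0, 0, 0, 2]), (3, ![0, 0, 1, 2]), (2, ![0, 0, 2, 0]), (1, ![0, 0, 2, 1]),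
                 (-1, ![0, 1, 0, 1]), (-1, ![0, 1, 1, 2]), (-1, ![0, 1, 2, 2]),
                 (1, ![0, 2, 0, 0]), (1, ![0, 2, 2, 2]), (1, ![1, 0, 1, 2]), (1, ![1, 1, 0, 2])]),
   (![2, 0, 2], [(1, ![0, 0, 0, 2]), (1, ![0, 0, 1, 2]), (1, ![0, 0, 2, 0]), (1, ![0, 0, 2, 1]),
                 (-1, ![0, 1, 0, 2]), (1, ![0, 1, 2, 2])]),
   (![2, 1, 0], [(1, ![0, 0, 1, 2]), (1, ![0, 0, 2, 0]), (-1, ![0, 1, 2, 2]), (1, ![0, 2, 0, 0]),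
                 (-1, ![0, 2, 1, 2]), (-1, ![1, 0, 1, 0]), (1, ![1, 1, 0, 2])]),
   (![2, 1, 1], [(-1, ![0, 0, 1, 2]), (-1, ![0, 0, 2, 0]), (-1, ![0, 1, 1, 1]),
                 (1, ![0, 1, 1, 2]), (-1, ![0, 2, 0, 0])]),
   (![2, 1, 2], [(-1, ![0, 0, 0, 2]), (-2, ![0, 0, 1, 2]), (-1, ![0, 0, 2, 0]),
                 (-1, ![0, 0, 2, 1]), (1, ![0, 1, 2, 2]), (-1, ![0, 2, 2, 2]),
                 (-1, ![1, 0, 1, 2]), (-1, ![1, 1, 0, 2])]),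
   (![2, 2, 1], [(-1, ![0, 1, 1, 2]), (-1, ![0, 1, 2, 1]), (1, ![0, 1, 2, 2]),
                 (1, ![0, 2, 1, 2]), (1, ![1, 0, 1, 0]), (-1, ![1, 1, 0, 2])])]

lemma chain_homotopy_coeff : ∀ e : Fin 3 → ZMod 3,
    Terms.coeff ((Terms.lookup homotopy₃ e).bind boundaryTerms ++
      (boundaryTerms e).bind (Terms.lookup homotopy₂)) =
    Terms.coeff ([(1, e)] ++ freeCycle.smul (-freeCocycle.coeff e) ++
      torsionCycle.smul (-torsionCocycle.coeff e)) := by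
  decide +kernel

lemma chain_homotopy :
    triBoundary 3 ∘ₗ Terms.tableMap homotopy₃ + Terms.tableMap homotopy₂ ∘ₗ triBoundary 2 =
      LinearMap.id - freeCocycle.dual.smulRight freeCycle.toFinsupp -
        torsionCocycle.dual.smulRight torsionCycle.toFinsupp := by
  refine Finsupp.basisSingleOne.ext fun e => ?_
  have h := Terms.toFinsupp_eq_of_coeff_eq (chain_homotopy_coeff e)
  simp only [Terms.toFinsupp_append, Terms.toFinsupp_smul] at h
  simpa [Terms.tableMap_single, Terms.dual_single, triBoundary_single, triBoundary_toFinsupp,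
    Terms.tableMap_toFinsupp, sub_eq_add_neg] using h

lemma freeCocycle_dual_triBoundary (y : (Fin 4 → ZMod 3) →₀ ℤ) :
    freeCocycle.dual (triBoundary 3 y) = 0 := by
  have h : ∀ y : Fin 4 → ZMod 3,
      ((boundaryTerms y).map fun p => p.1 * freeCocycle.coeff p.2).sum = 0 := by
    decide +kernel
  have hφ : freeCocycle.dual ∘ₗ triBoundary 3 = 0 := Finsupp.basisSingleOne.ext fun y => by
    simpa [triBoundary_single, Terms.dual_toFinsupp] using h y
  exact LinearMap.congr_fun hφ y

lemma torsionCocycle_dual_triBoundary (y : (Fin 4 → ZMod 3) →₀ ℤ) :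
    (torsionCocycle.dual (triBoundary 3 y) : ZMod 3) = 0 := by
  have h : ∀ y : Fin 4 → ZMod 3,
      (((boundaryTerms y).map fun p => p.1 * torsionCocycle.coeff p.2).sum : ZMod 3) = 0 := by
    decide +kernel
  have hφ : (Int.castAddHom (ZMod 3)).toIntLinearMap ∘ₗ torsionCocycle.dual ∘ₗ triBoundary 3 = 0 :=
    Finsupp.basisSingleOne.ext fun y => by
      simpa [triBoundary_single, Terms.dual_toFinsupp] using h y
  exact LinearMap.congr_fun hφ y

noncomputable def threeColourCertificate :
    HomologyCertificate (triBoundary 3) (triBoundary 2) 3 where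
  z₁ := freeCycle.toFinsupp
  z₂ := torsionCycle.toFinsupp
  f := freeCocycle.dual
  g := torsionCocycle.dual
  w := torsionBounding.toFinsupp
  d_z₁ := by
    rw [triBoundary_toFinsupp, ← Terms.toFinsupp_nil]
    exact Terms.toFinsupp_eq_of_coeff_eq (by decide +kernel)
  d_z₂ := by
    rw [triBoundary_toFinsupp, ← Terms.toFinsupp_nil]
    exact Terms.toFinsupp_eq_of_coeff_eq (by decide +kernel)
  f_z₁ := by rw [Terms.dual_toFinsupp]; decide +kernel
  f_z₂ := by rw [Terms.dual_toFinsupp]; decide +kernel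
  g_z₁ := by rw [Terms.dual_toFinsupp]; decide +kernel
  g_z₂ := by rw [Terms.dual_toFinsupp]; decide +kernel
  f_d := freeCocycle_dual_triBoundary
  g_d := torsionCocycle_dual_triBoundary
  d_w := by
    rw [triBoundary_toFinsupp, ← natCast_zsmul, ← Terms.toFinsupp_smul]
    exact Terms.toFinsupp_eq_of_coeff_eq (by decide +kernel)
  sub_mem_range x hx :=
    ⟨Terms.tableMap homotopy₃ x, by simpa [hx] using LinearMap.congr_fun chain_homotopy x⟩

/-- `H₃(BT) ≅ ℤ × ℤ/3` for the three-colour rack `T`: the group of 3-cycles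
modulo boundaries of 4-chains is `ℤ × ℤ/3`. -/
theorem H3_iso :
    Nonempty
      ((LinearMap.ker (triBoundary 2) ⧸
          Submodule.comap (LinearMap.ker (triBoundary 2)).subtype
            (LinearMap.range (triBoundary 3))) ≃ₗ[ℤ] ℤ × ZMod 3) :=
  ⟨threeColourCertificate.quotientEquiv⟩
end

section
/- The second rack homology H_2(BT) of the three-colour rack T is isomorphic to Z (the Z-factor coming from the one-element subrack), i.e., the cycle group modulo boundaries in degree 2 of the rack chain complex of T is infinite cyclic. -/
-- ### Auxiliary development ###

theorem sum_zmod3 {M : Type*} [AddCommMonoid M] (g : ZMod 3 → M) :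
    ∑ x : ZMod 3, g x = g 0 + g 1 + g 2 := Fin.sum_univ_three g

theorem sum_pi23 {M : Type*} [AddCommMonoid M] (f : (Fin 2 → ZMod 3) → M) :
    ∑ p, f p = f ![0,0] + f ![0,1] + f ![0,2] + f ![1,0] + f ![1,1] + f ![1,2]
      + f ![2,0] + f ![2,1] + f ![2,2] := by
  rw [← (finTwoArrowEquiv (ZMod 3)).symm.sum_comp, Fintype.sum_prod_type]
  rw [sum_zmod3 (fun x => _)]
  rw [sum_zmod3, sum_zmod3, sum_zmod3]
  simp [finTwoArrowEquiv, add_assoc]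

theorem lift_eval (w : (Fin 2 → ZMod 3) → ℤ) (v : (Fin 2 → ZMod 3) →₀ ℤ) :
    Finsupp.lift ℤ ℤ (Fin 2 → ZMod 3) w v = ∑ p : Fin 2 → ZMod 3, v p * w p := by
  simp only [Finsupp.lift_apply]
  rw [Finsupp.sum_fintype]
  · simp [mul_comm]
  · simp

theorem bd2_single (x : Fin 3 → ZMod 3) :
    triBoundary 2 (Finsupp.single x 1) = triBnd x := by
  simp [triBoundary, Finsupp.lift_apply, Finsupp.sum_single_index]

theorem bd1_eval (v : (Fin 2 → ZMod 3) →₀ ℤ) (q : Fin 1 → ZMod 3) :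
    (triBoundary 1 v) q = ∑ p : Fin 2 → ZMod 3, v p * (triBnd p) q := by
  simp only [triBoundary, Finsupp.lift_apply]
  rw [Finsupp.sum_apply, Finsupp.sum_fintype]
  · simp [mul_comm]
  · simp

theorem bndp_00 : triBnd ![(0:ZMod 3),0] =
    Finsupp.single ![0] 1 - Finsupp.single ![0] 1 := by
  have e0 : triFace false (0 : Fin 2) ![(0:ZMod 3),0] = ![0] := by decide
  have e0' : triFace true (0 : Fin 2) ![(0:ZMod 3),0] = ![0] := by decide
  have e1 : triFace false (1 : Fin 2) ![(0:ZMod 3),0] = ![0] := by decide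
  have e1' : triFace true (1 : Fin 2) ![(0:ZMod 3),0] = ![0] := by decide
  rw [triBnd, Fin.sum_univ_two, e0, e0', e1, e1']
  norm_num

theorem bndp_01 : triBnd ![(0:ZMod 3),1] =
    Finsupp.single ![0] 1 - Finsupp.single ![2] 1 := by
  have e0 : triFace false (0 : Fin 2) ![(0:ZMod 3),1] = ![1] := by decide
  have e0' : triFace true (0 : Fin 2) ![(0:ZMod 3),1] = ![1] := by decide
  have e1 : triFace false (1 : Fin 2) ![(0:ZMod 3),1] = ![0] := by decide
  have e1' : triFace true (1 : Fin 2) ![(0:ZMod 3),1] = ![2] := by decide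
  rw [triBnd, Fin.sum_univ_two, e0, e0', e1, e1']
  norm_num

theorem bndp_02 : triBnd ![(0:ZMod 3),2] =
    Finsupp.single ![0] 1 - Finsupp.single ![1] 1 := by
  have e0 : triFace false (0 : Fin 2) ![(0:ZMod 3),2] = ![2] := by decide
  have e0' : triFace true (0 : Fin 2) ![(0:ZMod 3),2] = ![2] := by decide
  have e1 : triFace false (1 : Fin 2) ![(0:ZMod 3),2] = ![0] := by decide
  have e1' : triFace true (1 : Fin 2) ![(0:ZMod 3),2] = ![1] := by decide
  rw [triBnd, Fin.sum_univ_two, e0, e0', e1, e1']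
  norm_num

theorem bndp_10 : triBnd ![(1:ZMod 3),0] =
    Finsupp.single ![1] 1 - Finsupp.single ![2] 1 := by
  have e0 : triFace false (0 : Fin 2) ![(1:ZMod 3),0] = ![0] := by decide
  have e0' : triFace true (0 : Fin 2) ![(1:ZMod 3),0] = ![0] := by decide
  have e1 : triFace false (1 : Fin 2) ![(1:ZMod 3),0] = ![1] := by decide
  have e1' : triFace true (1 : Fin 2) ![(1:ZMod 3),0] = ![2] := by decide
  rw [triBnd, Fin.sum_univ_two, e0, e0', e1, e1']
  norm_num

theorem bndp_11 : triBnd ![(1:ZMod 3),1] =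
    Finsupp.single ![1] 1 - Finsupp.single ![1] 1 := by
  have e0 : triFace false (0 : Fin 2) ![(1:ZMod 3),1] = ![1] := by decide
  have e0' : triFace true (0 : Fin 2) ![(1:ZMod 3),1] = ![1] := by decide
  have e1 : triFace false (1 : Fin 2) ![(1:ZMod 3),1] = ![1] := by decide
  have e1' : triFace true (1 : Fin 2) ![(1:ZMod 3),1] = ![1] := by decide
  rw [triBnd, Fin.sum_univ_two, e0, e0', e1, e1']
  norm_num

theorem bndp_12 : triBnd ![(1:ZMod 3),2] =
    Finsupp.single ![1] 1 - Finsupp.single ![0] 1 := by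
  have e0 : triFace false (0 : Fin 2) ![(1:ZMod 3),2] = ![2] := by decide
  have e0' : triFace true (0 : Fin 2) ![(1:ZMod 3),2] = ![2] := by decide
  have e1 : triFace false (1 : Fin 2) ![(1:ZMod 3),2] = ![1] := by decide
  have e1' : triFace true (1 : Fin 2) ![(1:ZMod 3),2] = ![0] := by decide
  rw [triBnd, Fin.sum_univ_two, e0, e0', e1, e1']
  norm_num

theorem bndp_20 : triBnd ![(2:ZMod 3),0] =
    Finsupp.single ![2] 1 - Finsupp.single ![1] 1 := by
  have e0 : triFace false (0 : Fin 2) ![(2:ZMod 3),0] = ![0] := by decide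
  have e0' : triFace true (0 : Fin 2) ![(2:ZMod 3),0] = ![0] := by decide
  have e1 : triFace false (1 : Fin 2) ![(2:ZMod 3),0] = ![2] := by decide
  have e1' : triFace true (1 : Fin 2) ![(2:ZMod 3),0] = ![1] := by decide
  rw [triBnd, Fin.sum_univ_two, e0, e0', e1, e1']
  norm_num

theorem bndp_21 : triBnd ![(2:ZMod 3),1] =
    Finsupp.single ![2] 1 - Finsupp.single ![0] 1 := by
  have e0 : triFace false (0 : Fin 2) ![(2:ZMod 3),1] = ![1] := by decide
  have e0' : triFace true (0 : Fin 2) ![(2:ZMod 3),1] = ![1] := by decide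
  have e1 : triFace false (1 : Fin 2) ![(2:ZMod 3),1] = ![2] := by decide
  have e1' : triFace true (1 : Fin 2) ![(2:ZMod 3),1] = ![0] := by decide
  rw [triBnd, Fin.sum_univ_two, e0, e0', e1, e1']
  norm_num

theorem bndp_22 : triBnd ![(2:ZMod 3),2] =
    Finsupp.single ![2] 1 - Finsupp.single ![2] 1 := by
  have e0 : triFace false (0 : Fin 2) ![(2:ZMod 3),2] = ![2] := by decide
  have e0' : triFace true (0 : Fin 2) ![(2:ZMod 3),2] = ![2] := by decide
  have e1 : triFace false (1 : Fin 2) ![(2:ZMod 3),2] = ![2] := by decide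
  have e1' : triFace true (1 : Fin 2) ![(2:ZMod 3),2] = ![2] := by decide
  rw [triBnd, Fin.sum_univ_two, e0, e0', e1, e1']
  norm_num

theorem bndc_001 : triBnd ![(0:ZMod 3),0,1] =
    Finsupp.single ![0,1] 1 - Finsupp.single ![0,1] 1 - Finsupp.single ![0,0] 1 + Finsupp.single ![2,2] 1 := by
  have e0 : triFace false (0 : Fin 3) ![(0:ZMod 3),0,1] = ![0,1] := by decide
  have e0' : triFace true (0 : Fin 3) ![(0:ZMod 3),0,1] = ![0,1] := by decide
  have e1 : triFace false (1 : Fin 3) ![(0:ZMod 3),0,1] = ![0,1] := by decide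
  have e1' : triFace true (1 : Fin 3) ![(0:ZMod 3),0,1] = ![0,1] := by decide
  have e2 : triFace false (2 : Fin 3) ![(0:ZMod 3),0,1] = ![0,0] := by decide
  have e2' : triFace true (2 : Fin 3) ![(0:ZMod 3),0,1] = ![2,2] := by decide
  rw [triBnd, Fin.sum_univ_three, e0, e0', e1, e1', e2, e2']
  norm_num
  abel

theorem bndc_010 : triBnd ![(0:ZMod 3),1,0] =
    Finsupp.single ![0,0] 1 - Finsupp.single ![2,0] 1 - Finsupp.single ![0,1] 1 + Finsupp.single ![0,2] 1 := by
  have e0 : triFace false (0 : Fin 3) ![(0:ZMod 3),1,0] = ![1,0] := by decide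
  have e0' : triFace true (0 : Fin 3) ![(0:ZMod 3),1,0] = ![1,0] := by decide
  have e1 : triFace false (1 : Fin 3) ![(0:ZMod 3),1,0] = ![0,0] := by decide
  have e1' : triFace true (1 : Fin 3) ![(0:ZMod 3),1,0] = ![2,0] := by decide
  have e2 : triFace false (2 : Fin 3) ![(0:ZMod 3),1,0] = ![0,1] := by decide
  have e2' : triFace true (2 : Fin 3) ![(0:ZMod 3),1,0] = ![0,2] := by decide
  rw [triBnd, Fin.sum_univ_three, e0, e0', e1, e1', e2, e2']
  norm_num
  abel

theorem bndc_012 : triBnd ![(0:ZMod 3),1,2] =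
    Finsupp.single ![0,2] 1 - Finsupp.single ![2,2] 1 - Finsupp.single ![0,1] 1 + Finsupp.single ![1,0] 1 := by
  have e0 : triFace false (0 : Fin 3) ![(0:ZMod 3),1,2] = ![1,2] := by decide
  have e0' : triFace true (0 : Fin 3) ![(0:ZMod 3),1,2] = ![1,2] := by decide
  have e1 : triFace false (1 : Fin 3) ![(0:ZMod 3),1,2] = ![0,2] := by decide
  have e1' : triFace true (1 : Fin 3) ![(0:ZMod 3),1,2] = ![2,2] := by decide
  have e2 : triFace false (2 : Fin 3) ![(0:ZMod 3),1,2] = ![0,1] := by decide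
  have e2' : triFace true (2 : Fin 3) ![(0:ZMod 3),1,2] = ![1,0] := by decide
  rw [triBnd, Fin.sum_univ_three, e0, e0', e1, e1', e2, e2']
  norm_num
  abel

theorem bndc_021 : triBnd ![(0:ZMod 3),2,1] =
    Finsupp.single ![0,1] 1 - Finsupp.single ![1,1] 1 - Finsupp.single ![0,2] 1 + Finsupp.single ![2,0] 1 := by
  have e0 : triFace false (0 : Fin 3) ![(0:ZMod 3),2,1] = ![2,1] := by decide
  have e0' : triFace true (0 : Fin 3) ![(0:ZMod 3),2,1] = ![2,1] := by decide
  have e1 : triFace false (1 : Fin 3) ![(0:ZMod 3),2,1] = ![0,1] := by decide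
  have e1' : triFace true (1 : Fin 3) ![(0:ZMod 3),2,1] = ![1,1] := by decide
  have e2 : triFace false (2 : Fin 3) ![(0:ZMod 3),2,1] = ![0,2] := by decide
  have e2' : triFace true (2 : Fin 3) ![(0:ZMod 3),2,1] = ![2,0] := by decide
  rw [triBnd, Fin.sum_univ_three, e0, e0', e1, e1', e2, e2']
  norm_num
  abel

theorem bndc_101 : triBnd ![(1:ZMod 3),0,1] =
    Finsupp.single ![1,1] 1 - Finsupp.single ![2,1] 1 - Finsupp.single ![1,0] 1 + Finsupp.single ![1,2] 1 := by
  have e0 : triFace false (0 : Fin 3) ![(1:ZMod 3),0,1] = ![0,1] := by decide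
  have e0' : triFace true (0 : Fin 3) ![(1:ZMod 3),0,1] = ![0,1] := by decide
  have e1 : triFace false (1 : Fin 3) ![(1:ZMod 3),0,1] = ![1,1] := by decide
  have e1' : triFace true (1 : Fin 3) ![(1:ZMod 3),0,1] = ![2,1] := by decide
  have e2 : triFace false (2 : Fin 3) ![(1:ZMod 3),0,1] = ![1,0] := by decide
  have e2' : triFace true (2 : Fin 3) ![(1:ZMod 3),0,1] = ![1,2] := by decide
  rw [triBnd, Fin.sum_univ_three, e0, e0', e1, e1', e2, e2']
  norm_num
  abel

theorem bndc_102 : triBnd ![(1:ZMod 3),0,2] =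
    Finsupp.single ![1,2] 1 - Finsupp.single ![2,2] 1 - Finsupp.single ![1,0] 1 + Finsupp.single ![0,1] 1 := by
  have e0 : triFace false (0 : Fin 3) ![(1:ZMod 3),0,2] = ![0,2] := by decide
  have e0' : triFace true (0 : Fin 3) ![(1:ZMod 3),0,2] = ![0,2] := by decide
  have e1 : triFace false (1 : Fin 3) ![(1:ZMod 3),0,2] = ![1,2] := by decide
  have e1' : triFace true (1 : Fin 3) ![(1:ZMod 3),0,2] = ![2,2] := by decide
  have e2 : triFace false (2 : Fin 3) ![(1:ZMod 3),0,2] = ![1,0] := by decide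
  have e2' : triFace true (2 : Fin 3) ![(1:ZMod 3),0,2] = ![0,1] := by decide
  rw [triBnd, Fin.sum_univ_three, e0, e0', e1, e1', e2, e2']
  norm_num
  abel

def pw0 : (Fin 2 → ZMod 3) → ℤ := fun p => if p = ![(1:ZMod 3),0] then (-1:ℤ) else (if p = ![(1:ZMod 3),1] then (-1:ℤ) else (if p = ![(1:ZMod 3),2] then (-2:ℤ) else (if p = ![(2:ZMod 3),0] then (-1:ℤ) else (if p = ![(2:ZMod 3),1] then (-2:ℤ) else (if p = ![(2:ZMod 3),2] then (-1:ℤ) else ((0:ℤ)))))))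
def pw1 : (Fin 2 → ZMod 3) → ℤ := fun p => if p = ![(1:ZMod 3),0] then (-1:ℤ) else (if p = ![(2:ZMod 3),0] then (1:ℤ) else (if p = ![(2:ZMod 3),1] then (1:ℤ) else ((0:ℤ))))
def pw2 : (Fin 2 → ZMod 3) → ℤ := fun p => if p = ![(1:ZMod 3),2] then (1:ℤ) else (if p = ![(2:ZMod 3),1] then (1:ℤ) else ((0:ℤ)))
def pw3 : (Fin 2 → ZMod 3) → ℤ := fun p => if p = ![(1:ZMod 3),0] then (1:ℤ) else (if p = ![(1:ZMod 3),2] then (1:ℤ) else (if p = ![(2:ZMod 3),1] then (1:ℤ) else ((0:ℤ))))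
def pw4 : (Fin 2 → ZMod 3) → ℤ := fun p => if p = ![(1:ZMod 3),1] then (1:ℤ) else ((0:ℤ))
def pw5 : (Fin 2 → ZMod 3) → ℤ := fun p => if p = ![(2:ZMod 3),1] then (-1:ℤ) else ((0:ℤ))
def pw6 : (Fin 2 → ZMod 3) → ℤ := fun p => if p = ![(0:ZMod 3),0] then (1:ℤ) else (if p = ![(1:ZMod 3),0] then (1:ℤ) else (if p = ![(1:ZMod 3),1] then (1:ℤ) else (if p = ![(1:ZMod 3),2] then (2:ℤ) else (if p = ![(2:ZMod 3),0] then (1:ℤ) else (if p = ![(2:ZMod 3),1] then (2:ℤ) else (if p = ![(2:ZMod 3),2] then (1:ℤ) else ((0:ℤ))))))))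

noncomputable def lam0 : ((Fin 2 → ZMod 3) →₀ ℤ) →ₗ[ℤ] ℤ := Finsupp.lift ℤ ℤ _ pw0
noncomputable def lam1 : ((Fin 2 → ZMod 3) →₀ ℤ) →ₗ[ℤ] ℤ := Finsupp.lift ℤ ℤ _ pw1
noncomputable def lam2 : ((Fin 2 → ZMod 3) →₀ ℤ) →ₗ[ℤ] ℤ := Finsupp.lift ℤ ℤ _ pw2
noncomputable def lam3 : ((Fin 2 → ZMod 3) →₀ ℤ) →ₗ[ℤ] ℤ := Finsupp.lift ℤ ℤ _ pw3
noncomputable def lam4 : ((Fin 2 → ZMod 3) →₀ ℤ) →ₗ[ℤ] ℤ := Finsupp.lift ℤ ℤ _ pw4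
noncomputable def lam5 : ((Fin 2 → ZMod 3) →₀ ℤ) →ₗ[ℤ] ℤ := Finsupp.lift ℤ ℤ _ pw5
noncomputable def lam6 : ((Fin 2 → ZMod 3) →₀ ℤ) →ₗ[ℤ] ℤ := Finsupp.lift ℤ ℤ _ pw6

noncomputable def z2 : (Fin 2 → ZMod 3) →₀ ℤ := Finsupp.single ![0,0] 1

theorem z2_cycle : triBoundary 1 z2 = 0 := by
  rw [z2, show ((![0,0] : Fin 2 → ZMod 3)) = ![(0:ZMod 3),0] from rfl]
  have h := bd2_single
  have : triBoundary 1 (Finsupp.single ![(0:ZMod 3),0] 1) = triBnd ![(0:ZMod 3),0] := by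
    simp [triBoundary, Finsupp.lift_apply, Finsupp.sum_single_index]
  rw [this, bndp_00]
  simp

theorem lam6_single (p : Fin 2 → ZMod 3) : lam6 (Finsupp.single p 1) = pw6 p := by
  simp [lam6, Finsupp.lift_apply, Finsupp.sum_single_index]

theorem lam6_bnd (x : Fin 3 → ZMod 3) : lam6 (triBnd x) = 0 := by
  rw [triBnd]
  rw [map_sum]
  simp only [map_smul, map_sub, lam6_single]
  rw [Fin.sum_univ_three]
  norm_num
  revert x
  decide

theorem lam6_boundary (w : (Fin 3 → ZMod 3) →₀ ℤ) : lam6 (triBoundary 2 w) = 0 := by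
  have : (lam6.comp (triBoundary 2)) w = lam6 (triBoundary 2 w) := rfl
  rw [← this]
  have hz : lam6.comp (triBoundary 2) = 0 := by
    apply Finsupp.lhom_ext
    intro x (c : ℤ)
    have : Finsupp.single x c = c • Finsupp.single x (1:ℤ) := by simp
    rw [this]
    simp only [map_smul, LinearMap.comp_apply, LinearMap.zero_apply, bd2_single]
    simp [lam6_bnd]
  rw [hz]
  rfl

theorem lam6_z2 : lam6 z2 = 1 := by
  rw [z2, show ((![0,0] : Fin 2 → ZMod 3)) = ![(0:ZMod 3),0] from rfl, lam6_single]
  decide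

noncomputable def u0 : (Fin 3 → ZMod 3) →₀ ℤ := (-1:ℤ) • Finsupp.single ![(0:ZMod 3),0,1] (1:ℤ)
noncomputable def u1 : (Fin 3 → ZMod 3) →₀ ℤ := (-1:ℤ) • Finsupp.single ![(0:ZMod 3),0,1] (1:ℤ) + (-1:ℤ) • Finsupp.single ![(0:ZMod 3),1,0] (1:ℤ)
noncomputable def u2 : (Fin 3 → ZMod 3) →₀ ℤ := (1:ℤ) • Finsupp.single ![(0:ZMod 3),0,1] (1:ℤ) + (1:ℤ) • Finsupp.single ![(0:ZMod 3),1,0] (1:ℤ) + (1:ℤ) • Finsupp.single ![(1:ZMod 3),0,2] (1:ℤ)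
noncomputable def u3 : (Fin 3 → ZMod 3) →₀ ℤ := (-1:ℤ) • Finsupp.single ![(0:ZMod 3),0,1] (1:ℤ) + (-1:ℤ) • Finsupp.single ![(0:ZMod 3),1,0] (1:ℤ) + (1:ℤ) • Finsupp.single ![(0:ZMod 3),1,2] (1:ℤ)
noncomputable def u4 : (Fin 3 → ZMod 3) →₀ ℤ := (-1:ℤ) • Finsupp.single ![(0:ZMod 3),0,1] (1:ℤ) + (-1:ℤ) • Finsupp.single ![(0:ZMod 3),1,0] (1:ℤ) + (-1:ℤ) • Finsupp.single ![(0:ZMod 3),2,1] (1:ℤ)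
noncomputable def u5 : (Fin 3 → ZMod 3) →₀ ℤ := (1:ℤ) • Finsupp.single ![(0:ZMod 3),1,2] (1:ℤ) + (1:ℤ) • Finsupp.single ![(0:ZMod 3),2,1] (1:ℤ) + (1:ℤ) • Finsupp.single ![(1:ZMod 3),0,1] (1:ℤ)

theorem bdu0 : triBoundary 2 u0 = (1:ℤ) • Finsupp.single ![(0:ZMod 3),0] (1:ℤ) + (-1:ℤ) • Finsupp.single ![(2:ZMod 3),2] (1:ℤ) := by
  rw [u0]
  simp only [map_add, map_smul, bd2_single, bndc_001]
  abel

theorem bdu1 : triBoundary 2 u1 = (1:ℤ) • Finsupp.single ![(0:ZMod 3),1] (1:ℤ) + (-1:ℤ) • Finsupp.single ![(0:ZMod 3),2] (1:ℤ) + (1:ℤ) • Finsupp.single ![(2:ZMod 3),0] (1:ℤ) + (-1:ℤ) • Finsupp.single ![(2:ZMod 3),2] (1:ℤ) := by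
  rw [u1]
  simp only [map_add, map_smul, bd2_single, bndc_001, bndc_010]
  abel

theorem bdu2 : triBoundary 2 u2 = (1:ℤ) • Finsupp.single ![(0:ZMod 3),2] (1:ℤ) + (-1:ℤ) • Finsupp.single ![(1:ZMod 3),0] (1:ℤ) + (1:ℤ) • Finsupp.single ![(1:ZMod 3),2] (1:ℤ) + (-1:ℤ) • Finsupp.single ![(2:ZMod 3),0] (1:ℤ) := by
  rw [u2]
  simp only [map_add, map_smul, bd2_single, bndc_001, bndc_010, bndc_102]
  abel

theorem bdu3 : triBoundary 2 u3 = (1:ℤ) • Finsupp.single ![(1:ZMod 3),0] (1:ℤ) + (1:ℤ) • Finsupp.single ![(2:ZMod 3),0] (1:ℤ) + (-2:ℤ) • Finsupp.single ![(2:ZMod 3),2] (1:ℤ) := by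
  rw [u3]
  simp only [map_add, map_smul, bd2_single, bndc_001, bndc_010, bndc_012]
  abel

theorem bdu4 : triBoundary 2 u4 = (1:ℤ) • Finsupp.single ![(1:ZMod 3),1] (1:ℤ) + (-1:ℤ) • Finsupp.single ![(2:ZMod 3),2] (1:ℤ) := by
  rw [u4]
  simp only [map_add, map_smul, bd2_single, bndc_001, bndc_010, bndc_021]
  abel

theorem bdu5 : triBoundary 2 u5 = (1:ℤ) • Finsupp.single ![(1:ZMod 3),2] (1:ℤ) + (1:ℤ) • Finsupp.single ![(2:ZMod 3),0] (1:ℤ) + (-1:ℤ) • Finsupp.single ![(2:ZMod 3),1] (1:ℤ) + (-1:ℤ) • Finsupp.single ![(2:ZMod 3),2] (1:ℤ) := by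
  rw [u5]
  simp only [map_add, map_smul, bd2_single, bndc_012, bndc_021, bndc_101]
  abel


set_option maxHeartbeats 1000000 in
theorem key (v : (Fin 2 → ZMod 3) →₀ ℤ) (hv : triBoundary 1 v = 0) :
    v - lam6 v • z2 =
      triBoundary 2 (lam0 v • u0 + lam1 v • u1 + lam2 v • u2 + lam3 v • u3
        + lam4 v • u4 + lam5 v • u5) := by
  have E0 : (triBoundary 1 v) ![(0:ZMod 3)] = 0 := by rw [hv]; rfl
  have E1 : (triBoundary 1 v) ![(1:ZMod 3)] = 0 := by rw [hv]; rfl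
  have E2 : (triBoundary 1 v) ![(2:ZMod 3)] = 0 := by rw [hv]; rfl
  rw [bd1_eval, sum_pi23] at E0 E1 E2
  simp only [bndp_00, bndp_01, bndp_02, bndp_10, bndp_11, bndp_12, bndp_20, bndp_21, bndp_22,
    Finsupp.sub_apply, Finsupp.single_apply] at E0 E1 E2
  simp (config := { decide := true }) only [ite_true, ite_false] at E0 E1 E2
  have hL0 : lam0 v = ∑ p : Fin 2 → ZMod 3, v p * pw0 p := lift_eval pw0 v
  have hL1 : lam1 v = ∑ p : Fin 2 → ZMod 3, v p * pw1 p := lift_eval pw1 v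
  have hL2 : lam2 v = ∑ p : Fin 2 → ZMod 3, v p * pw2 p := lift_eval pw2 v
  have hL3 : lam3 v = ∑ p : Fin 2 → ZMod 3, v p * pw3 p := lift_eval pw3 v
  have hL4 : lam4 v = ∑ p : Fin 2 → ZMod 3, v p * pw4 p := lift_eval pw4 v
  have hL5 : lam5 v = ∑ p : Fin 2 → ZMod 3, v p * pw5 p := lift_eval pw5 v
  have hL6 : lam6 v = ∑ p : Fin 2 → ZMod 3, v p * pw6 p := lift_eval pw6 v
  rw [sum_pi23] at hL0 hL1 hL2 hL3 hL4 hL5 hL6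
  simp (config := { decide := true }) only [ite_true, ite_false, pw0, pw1, pw2, pw3, pw4, pw5, pw6] at hL0 hL1 hL2 hL3 hL4 hL5 hL6
  rw [map_add, map_add, map_add, map_add, map_add,
    map_smul, map_smul, map_smul, map_smul, map_smul, map_smul,
    bdu0, bdu1, bdu2, bdu3, bdu4, bdu5]
  rw [hL0, hL1, hL2, hL3, hL4, hL5, hL6]
  ext q
  obtain ⟨a, b, rfl⟩ : ∃ a b, q = ![a, b] := ⟨q 0, q 1, by funext j; fin_cases j <;> rfl⟩
  fin_cases a <;> fin_cases b <;>
    · simp only [z2, Finsupp.sub_apply, Finsupp.add_apply, Finsupp.smul_apply,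
        Finsupp.single_apply, smul_eq_mul]
      simp (config := { decide := true }) only [ite_true, ite_false]
      push_cast
      omega


/-- `H₂(BT) ≅ ℤ` for the three-colour rack `T`: the group of 2-cycles
modulo boundaries of 3-chains is infinite cyclic. -/
theorem H2_iso :
    Nonempty
      ((LinearMap.ker (triBoundary 1) ⧸
          Submodule.comap (LinearMap.ker (triBoundary 1)).subtype
            (LinearMap.range (triBoundary 2))) ≃ₗ[ℤ] ℤ) := by
  set K := LinearMap.ker (triBoundary 1) with hK
  set N := Submodule.comap K.subtype (LinearMap.range (triBoundary 2)) with hN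
  have hle : N ≤ LinearMap.ker (lam6 ∘ₗ K.subtype) := by
    intro x hx
    obtain ⟨w, hw⟩ := hx
    simp only [LinearMap.mem_ker, LinearMap.comp_apply]
    have : (K.subtype x) = triBoundary 2 w := hw.symm
    rw [this, lam6_boundary]
  set f : (K ⧸ N) →ₗ[ℤ] ℤ := Submodule.liftQ N (lam6 ∘ₗ K.subtype) hle with hf
  have hzK : z2 ∈ K := by rw [hK, LinearMap.mem_ker, z2_cycle]
  have hsurj : Function.Surjective f := by
    intro n
    refine ⟨Submodule.Quotient.mk (n • ⟨z2, hzK⟩ : K), ?_⟩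
    rw [hf, Submodule.liftQ_apply]
    simp [lam6_z2]
  have hinj : Function.Injective f := by
    rw [← LinearMap.ker_eq_bot, LinearMap.ker_eq_bot']
    intro x hx
    obtain ⟨y, rfl⟩ := Submodule.Quotient.mk_surjective N x
    rw [hf, Submodule.liftQ_apply, LinearMap.comp_apply] at hx
    have hy6 : lam6 (y : (Fin 2 → ZMod 3) →₀ ℤ) = 0 := hx
    have hyker : triBoundary 1 (y : (Fin 2 → ZMod 3) →₀ ℤ) = 0 := y.2
    have hkey := key _ hyker
    rw [hy6, zero_smul, sub_zero] at hkey
    rw [Submodule.Quotient.mk_eq_zero]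
    rw [hN]
    exact ⟨_, hkey.symm⟩
  exact ⟨(LinearEquiv.ofBijective f ⟨hinj, hsurj⟩)⟩
end
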